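/- arXiv:2403.04747 — 2 statements merged into one kernel-verified Lean document; each statement's English description precedes it below -/
import Mathlib

section
/- Let 𝒳 be a type with exactly N elements (so the number of unique possible elements is bounded by N). Then there exists a function f : 𝒳 → ℝ^N such that the map h sending a finite multiset X over 𝒳 to h(X) = (1/√|X|) ∑_{x ∈ X} f(x) (sum counted with multiplicity, |X| the cardinality of X) is injective on nonempty finite multisets: if X, Y are nonempty finite multisets over 𝒳 with h(X) = h(Y), then X = Y. (Expressivity of variance-preserving readout.) -/
/-- **Expressivity of the variance-preserving readout.**
If `𝒳` has exactly `N` elements, then there is a function `f : 𝒳 → ℝ^N` such that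
`h(X) = (1/√|X|) ∑_{x ∈ X} f(x)` is injective on nonempty finite multisets over `𝒳`. -/
theorem vpa_readout_injective_on_multisets
    (N : ℕ) (𝒳 : Type*) [Fintype 𝒳] (hcard : Fintype.card 𝒳 = N) :
    ∃ f : 𝒳 → (Fin N → ℝ),
      ∀ X Y : Multiset 𝒳, X ≠ 0 → Y ≠ 0 →
        (Real.sqrt X.card)⁻¹ • (X.map f).sum = (Real.sqrt Y.card)⁻¹ • (Y.map f).sum →
        X = Y := by
  classical
  have e : 𝒳 ≃ Fin N := Fintype.equivFinOfCardEq hcard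
  refine ⟨fun x => Pi.single (e x) 1, ?_⟩
  intro X Y hX hY h
  have key : ∀ Z : Multiset 𝒳, ∀ x : 𝒳,
      ((Z.map (fun x => (Pi.single (e x) 1 : Fin N → ℝ))).sum) (e x) = (Z.count x : ℝ) := by
    intro Z x
    induction Z using Multiset.induction with
    | empty => simp
    | cons a s ih =>
      rw [Multiset.map_cons, Multiset.sum_cons, Pi.add_apply, ih, Multiset.count_cons,
        Pi.single_apply]
      by_cases hxa : x = a <;> simp [hxa, add_comm, e.apply_eq_iff_eq]
  have hx : ∀ x : 𝒳, (Real.sqrt X.card)⁻¹ * (X.count x : ℝ)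
      = (Real.sqrt Y.card)⁻¹ * (Y.count x : ℝ) := by
    intro x
    have := congrFun h (e x)
    simpa [key, Pi.smul_apply, smul_eq_mul] using this
  have hcnt : ∀ Z : Multiset 𝒳, (∑ x : 𝒳, (Z.count x : ℝ)) = (Z.card : ℝ) := by
    intro Z
    rw [← Multiset.toFinset_sum_count_eq Z]
    push_cast
    refine (Finset.sum_subset (Finset.subset_univ _) ?_).symm
    intro x _ hx
    simp [Multiset.count_eq_zero_of_notMem (by simpa [Multiset.mem_toFinset] using hx)]
  have hsum : (Real.sqrt X.card)⁻¹ * (X.card : ℝ)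
      = (Real.sqrt Y.card)⁻¹ * (Y.card : ℝ) := by
    have h1 : ∀ Z : Multiset 𝒳, (Real.sqrt Z.card)⁻¹ * (Z.card : ℝ)
        = ∑ x : 𝒳, (Real.sqrt Z.card)⁻¹ * (Z.count x : ℝ) := by
      intro Z; rw [← Finset.mul_sum, hcnt]
    rw [h1 X, h1 Y]
    exact Finset.sum_congr rfl fun x _ => hx x
  have hcard_eq : X.card = Y.card := by
    have hs : Real.sqrt X.card = Real.sqrt Y.card := by
      have hXs : (Real.sqrt X.card)⁻¹ * (X.card : ℝ) = Real.sqrt X.card := by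
        rw [inv_mul_eq_div, Real.div_sqrt]
      have hYs : (Real.sqrt Y.card)⁻¹ * (Y.card : ℝ) = Real.sqrt Y.card := by
        rw [inv_mul_eq_div, Real.div_sqrt]
      rw [← hXs, ← hYs, hsum]
    have : (X.card : ℝ) = (Y.card : ℝ) := by
      have := congrArg (fun t => t ^ 2) hs
      simpa [Real.sq_sqrt (by positivity : (0:ℝ) ≤ (X.card:ℝ)),
        Real.sq_sqrt (by positivity : (0:ℝ) ≤ (Y.card:ℝ))] using this
    exact_mod_cast this
  have hpos : (0:ℝ) < Real.sqrt X.card := by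
    have : 0 < X.card := Multiset.card_pos.mpr hX
    positivity
  ext x
  have := hx x
  rw [hcard_eq] at this
  have := mul_left_cancel₀ (by rw [hcard_eq] at hpos; exact (inv_pos.mpr hpos).ne') this
  exact_mod_cast this
end

section
/- Let 𝒳 be a type with exactly N elements, Z : 𝒳 → Fin N a bijection, and f(x) = e_{Z(x)} the one-hot encoding into ℝ^N. For any nonempty finite multiset X over 𝒳, multiplying the VPA readout embedding by √|X| recovers the count vector of the multiset: √|X| · h(X) = ∑_{x ∈ X} e_{Z(x)}, whose coordinate at index Z(x) equals the multiplicity of x in X; hence the multiset X can be uniquely reconstructed from h(X) = (1/√|X|) ∑_{x ∈ X} f(x). -/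
/-!
With one-hot encodings, `√|X| • h X` is the count vector of `X`. The readout itself still
determines `|X|`: its coordinates sum to `|X| / √|X| = √|X|`. So `h X = h Y` forces equal
count vectors, hence `X = Y`.
-/

open Function

namespace Multiset

variable {α ι R : Type*} [DecidableEq ι] [AddCommMonoidWithOne R]

theorem sum_map_single_apply_of_injective [DecidableEq α] {Z : α → ι} (hZ : Injective Z)
    (X : Multiset α) (a : α) :
    (X.map fun x => (Pi.single (Z x) 1 : ι → R)).sum (Z a) = X.count a := by
  induction X using Multiset.induction with
  | empty => simp
  | cons b X ih =>
    by_cases hab : a = b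
    · subst hab
      simp [ih, add_comm]
    · simp [ih, hab, hZ.ne hab]

theorem sum_apply_sum_map_single [Fintype ι] (Z : α → ι) (X : Multiset α) :
    ∑ i, (X.map fun x => (Pi.single (Z x) 1 : ι → R)).sum i = X.card := by
  induction X using Multiset.induction with
  | empty => simp
  | cons b X ih => simp [Finset.sum_add_distrib, ih, add_comm]

end Multiset

theorem Real.sum_inv_sqrt_smul_apply {ι : Type*} [Fintype ι] {v : ι → ℝ} {c : ℝ}
    (hv : ∑ i, v i = c) : ∑ i, ((√c)⁻¹ • v) i = √c := by
  simp only [Pi.smul_apply, smul_eq_mul]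
  rw [← Finset.mul_sum, hv, ← div_eq_inv_mul, Real.div_sqrt]

theorem vpa_readout_reconstructs_multiset_general
    (N : ℕ) (𝒳 : Type*) [DecidableEq 𝒳]
    (Z : 𝒳 ≃ Fin N) (f : 𝒳 → (Fin N → ℝ))
    (hf : ∀ x, f x = Pi.single (Z x) (1 : ℝ))
    (h : Multiset 𝒳 → (Fin N → ℝ))
    (hdef : ∀ X : Multiset 𝒳, h X = (Real.sqrt X.card)⁻¹ • (X.map f).sum) :
    (∀ X : Multiset 𝒳, X ≠ 0 → Real.sqrt X.card • h X = (X.map f).sum) ∧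
    (∀ X : Multiset 𝒳, X ≠ 0 → ∀ x : 𝒳,
        (Real.sqrt X.card • h X) (Z x) = X.count x) ∧
    (∀ X Y : Multiset 𝒳, X ≠ 0 → Y ≠ 0 → h X = h Y → X = Y) := by
  have hf : f = fun x => Pi.single (Z x) 1 := funext hf
  have rescale (X : Multiset 𝒳) (hX : X ≠ 0) : √X.card • h X = (X.map f).sum := by
    have hpos : (0 : ℝ) < X.card := by exact_mod_cast Multiset.card_pos.2 hX
    rw [hdef, smul_inv_smul₀ (Real.sqrt_ne_zero'.2 hpos)]
  have count_eq (X : Multiset 𝒳) (hX : X ≠ 0) (x : 𝒳) : (√X.card • h X) (Z x) = X.count x := by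
    rw [rescale X hX, hf, Multiset.sum_map_single_apply_of_injective Z.injective]
  have sum_readout (X : Multiset 𝒳) : ∑ i, h X i = √X.card := by
    rw [hdef, hf]
    exact Real.sum_inv_sqrt_smul_apply (Multiset.sum_apply_sum_map_single _ X)
  refine ⟨rescale, count_eq, fun X Y hX hY hXY => Multiset.ext.2 fun x => ?_⟩
  have hcard : √X.card = √Y.card := by rw [← sum_readout, ← sum_readout, hXY]
  have hcount : (X.count x : ℝ) = Y.count x := by rw [← count_eq X hX, ← count_eq Y hY, hXY, hcard]
  exact_mod_cast hcount

/-- **The multiset can be uniquely reconstructed from the VPA readout embedding.**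
With the one-hot encoding `f x = e_{Z x}` into `ℝ^N`, multiplying the VPA readout
`h(X) = (1/√|X|) ∑_{x ∈ X} f(x)` of a nonempty finite multiset `X` by `√|X|` recovers
the count vector `∑_{x ∈ X} e_{Z x}`, whose coordinate at `Z x` is the multiplicity of
`x` in `X`; hence `h` is injective on nonempty finite multisets. -/
theorem vpa_readout_reconstructs_multiset
    (N : ℕ) (𝒳 : Type*) [Fintype 𝒳] [DecidableEq 𝒳] (hcard : Fintype.card 𝒳 = N)
    (Z : 𝒳 ≃ Fin N) (f : 𝒳 → (Fin N → ℝ))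
    (hf : ∀ x, f x = Pi.single (Z x) (1 : ℝ))
    (h : Multiset 𝒳 → (Fin N → ℝ))
    (hdef : ∀ X : Multiset 𝒳, h X = (Real.sqrt X.card)⁻¹ • (X.map f).sum) :
    (∀ X : Multiset 𝒳, X ≠ 0 → Real.sqrt X.card • h X = (X.map f).sum) ∧
    (∀ X : Multiset 𝒳, X ≠ 0 → ∀ x : 𝒳,
        (Real.sqrt X.card • h X) (Z x) = X.count x) ∧
    (∀ X Y : Multiset 𝒳, X ≠ 0 → Y ≠ 0 → h X = h Y → X = Y) :=
  vpa_readout_reconstructs_multiset_general N 𝒳 Z f hf h hdef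
end
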